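/- There exists a nontrivial (nonzero, nonatomic) shift-invariant Borel measure on the quotient of Σ^ℤ by the relation d_B = 0, equipped with the Besicovitch metric topology. Concretely, pushing forward Lebesgue measure on [0,1] along the isometric embedding U' : [0,1] → {0,1}^ℤ (density coding) yields such a measure, supported on a zero-entropy subshift's projection, since each point in the image is shift-invariant modulo d_B = 0. -/

import Mathlib

open Filter

/-- Hamming distance between `x` and `y` on the coordinate interval `[a, b]`. -/
noncomputable def hamIcc {A : Type*} (x y : ℤ → A) (a b : ℤ) : ℕ :=
  @Finset.card ℤ (@Finset.filter ℤ (fun i => x i ≠ y i) (Classical.decPred _) (Finset.Icc a b))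

/-- The Besicovitch pseudodistance on `A^ℤ`. -/
noncomputable def dB {A : Type*} (x y : ℤ → A) : ℝ :=
  atTop.limsup fun n : ℕ => (hamIcc x y (-(n : ℤ)) n : ℝ) / (2 * n + 1)

/-- The Weyl pseudodistance on `A^ℤ`. -/
noncomputable def dW {A : Type*} (x y : ℤ → A) : ℝ :=
  atTop.limsup fun n : ℕ => ⨆ m : ℤ, (hamIcc x y (m - n) (m + n) : ℝ) / (2 * n + 1)

/-- The shift map. -/
def shiftMap {A : Type*} (x : ℤ → A) : ℤ → A := fun i => x (i + 1)

/-- A subshift: a shift-invariant subset of `A^ℤ` closed in the Cantor topology. -/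
def IsSubshift {A : Type*} (X : Set (ℤ → A)) : Prop :=
  (∀ x ∈ X, shiftMap x ∈ X) ∧ (∀ x ∈ X, (fun i => x (i - 1)) ∈ X) ∧
  (∀ x : ℤ → A, (∀ n : ℕ, ∃ y ∈ X, ∀ i : ℤ, |i| ≤ (n : ℤ) → y i = x i) → x ∈ X)

/-- The word `w` occurs in (some point of) `X`. -/
def occursIn {A : Type*} (X : Set (ℤ → A)) {k : ℕ} (w : Fin k → A) : Prop :=
  ∃ x ∈ X, ∃ i : ℤ, ∀ j : Fin k, x (i + j) = w j

/-- A shift of finite type: defined by a clopen window condition. -/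
def IsSFT {A : Type*} (X : Set (ℤ → A)) : Prop :=
  ∃ (k : ℕ) (P : (Fin k → A) → Prop), X = {x | ∀ i : ℤ, P (fun j => x (i + j))}

/-- A sliding block code (cellular automaton when `A = B`) of some radius `r`. -/
def IsSlidingBlock {A B : Type*} (φ : (ℤ → A) → (ℤ → B)) : Prop :=
  ∃ (r : ℕ) (f : (Fin (2 * r + 1) → A) → B), ∀ x i, φ x i = f fun j => x (i - r + j)

/-- A sofic shift: the image of an SFT under a sliding block code. -/
def IsSofic {A : Type*} (X : Set (ℤ → A)) : Prop :=
  ∃ (B : Type) (_ : Fintype B) (Y : Set (ℤ → B)) (φ : (ℤ → B) → (ℤ → A)),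
    IsSFT Y ∧ IsSlidingBlock φ ∧ X = φ '' Y

/-- Topological mixing for shift spaces, in terms of words of the language. -/
def IsMixingShift {A : Type*} (X : Set (ℤ → A)) : Prop :=
  ∀ (k l : ℕ) (u : Fin k → A) (v : Fin l → A), occursIn X u → occursIn X v →
    ∃ N : ℕ, ∀ n ≥ N, ∃ x ∈ X, ∃ i : ℤ,
      (∀ j : Fin k, x (i + j) = u j) ∧ (∀ j : Fin l, x (i + k + n + j) = v j)

/-- Topological entropy of a shift space. -/
noncomputable def shiftEntropy {A : Type*} (X : Set (ℤ → A)) : ℝ :=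
  atTop.limsup fun n : ℕ => Real.log (Set.ncard {w : Fin n → A | occursIn X w}) / n

/-- The periodic configuration `∞w∞` with period word `w`. -/
def perPt {A : Type*} {n : ℕ} (hn : 0 < n) (w : Fin n → A) : ℤ → A := fun i =>
  w ⟨(i % (n : ℤ)).toNat, by
    have h1 : (0 : ℤ) < (n : ℤ) := by exact_mod_cast hn
    have h2 := Int.emod_nonneg i (by omega : (n : ℤ) ≠ 0)
    have h3 := Int.emod_lt_of_pos i h1
    omega⟩

/-- The density coding `U' : [0,1] → {0,1}^ℕ`: the dyadic interval of `ℕ` containing `n`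
has left endpoint `2^(Nat.log 2 (n+1)) - 1` and length `L = 2^(Nat.log 2 (n+1))`; it is
filled with `⌊x·L⌋` zeros (`false`) followed by ones (`true`). -/
noncomputable def Uprime (x : ℝ) (n : ℕ) : Bool :=
  decide (⌊x * 2 ^ Nat.log 2 (n + 1)⌋ ≤ ((n : ℤ) + 1 - 2 ^ Nat.log 2 (n + 1)))

/-- The two-sided version `T'(x) = U'(x)^R.U'(x)`. -/
noncomputable def Tprime (x : ℝ) : ℤ → Bool := fun i =>
  if 0 ≤ i then Uprime x i.toNat else Uprime x (-i - 1).toNat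

/-- The one-sided Besicovitch pseudodistance. -/
noncomputable def dB1 {A : Type*} (u v : ℕ → A) : ℝ :=
  atTop.limsup fun n : ℕ =>
    ((@Finset.filter ℕ (fun i => u i ≠ v i) (Classical.decPred _) (Finset.range n)).card : ℝ) / n

/-!
Push Lebesgue measure on `[0,1]` forward along the density coding `x ↦ T'(x)`.
On the dyadic block `[2^k - 1, 2^(k+1) - 1)` the sequence `U'(x)` is `⌊x 2^k⌋` zeros followed
by ones, so up to position `N` it changes value only `O(log N)` times; hence
`d_B(σ T'(x), T'(x)) = 0`. The codes of `s` and `t` differ on `|⌊s 2^k⌋ - ⌊t 2^k⌋|` places of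
the `k`-th block, so on `[0,1]` the coding is Lipschitz for `d_B` (making the image measure Borel)
and `d_B(T'(s), T'(t)) ≥ |s - t| / 8` (so each class `d_B = 0` pulls back to at most one point).
A Borel set of a pseudometric space is a union of classes of inseparable points, and `σ T'(x)`
lies in the class of `T'(x)`, which gives shift invariance.
-/

open Topology
open scoped Finset unitInterval

section Hamming

variable {A : Type*}

theorem hamIcc_eq_card_filter [DecidableEq A] (x y : ℤ → A) (a b : ℤ) :
    hamIcc x y a b = #{i ∈ Finset.Icc a b | x i ≠ y i} := by
  rw [hamIcc]
  congr

theorem hamIcc_self (x : ℤ → A) (a b : ℤ) : hamIcc x x a b = 0 := by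
  classical
  simp [hamIcc_eq_card_filter]

theorem hamIcc_comm (x y : ℤ → A) (a b : ℤ) : hamIcc x y a b = hamIcc y x a b := by
  classical
  simp only [hamIcc_eq_card_filter, ne_comm]

theorem hamIcc_triangle (x y z : ℤ → A) (a b : ℤ) :
    hamIcc x z a b ≤ hamIcc x y a b + hamIcc y z a b := by
  classical
  simp only [hamIcc_eq_card_filter]
  refine (Finset.card_le_card fun i hi => ?_).trans (Finset.card_union_le _ _)
  simp only [Finset.mem_union, Finset.mem_filter] at hi ⊢
  by_cases h : x i = y i
  · exact Or.inr ⟨hi.1, h ▸ hi.2⟩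
  · exact Or.inl ⟨hi.1, h⟩

theorem hamIcc_le_card (x y : ℤ → A) (n : ℕ) : hamIcc x y (-n) n ≤ 2 * n + 1 := by
  classical
  rw [hamIcc_eq_card_filter]
  refine (Finset.card_filter_le _ _).trans ?_
  simp only [Int.card_Icc]
  omega

theorem hamIcc_shiftMap (x y : ℤ → A) (a b : ℤ) :
    hamIcc (shiftMap x) (shiftMap y) a b = hamIcc x y (a + 1) (b + 1) := by
  classical
  rw [hamIcc_eq_card_filter, hamIcc_eq_card_filter, ← Finset.map_add_right_Icc,
    Finset.filter_map, Finset.card_map]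
  rfl

theorem hamIcc_le_add_one_of_subset_insert (x y : ℤ → A) {a b a' b' c : ℤ}
    (h : Finset.Icc a b ⊆ insert c (Finset.Icc a' b')) :
    hamIcc x y a b ≤ hamIcc x y a' b' + 1 := by
  classical
  simp only [hamIcc_eq_card_filter]
  refine (Finset.card_le_card fun i hi => ?_).trans
    (Finset.card_insert_le c {i ∈ Finset.Icc a' b' | x i ≠ y i})
  rw [Finset.mem_filter] at hi
  rcases Finset.mem_insert.1 (h hi.1) with rfl | hi'
  · exact Finset.mem_insert_self _ _
  · exact Finset.mem_insert_of_mem (Finset.mem_filter.2 ⟨hi', hi.2⟩)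

section HammingRange

variable [DecidableEq A]

def hamRange (u v : ℕ → A) (N : ℕ) : ℕ := #{i ∈ Finset.range N | u i ≠ v i}

theorem hamRange_comm (u v : ℕ → A) (N : ℕ) : hamRange u v N = hamRange v u N := by
  simp only [hamRange, ne_comm]

theorem hamRange_mono (u v : ℕ → A) : Monotone (hamRange u v) := fun _ _ h =>
  Finset.card_le_card (Finset.filter_subset_filter _ (Finset.range_subset_range.2 h))

theorem hamRange_add (u v : ℕ → A) (M L : ℕ) : hamRange u v (M + L) =
    hamRange u v M + hamRange (fun j => u (M + j)) (fun j => v (M + j)) L := by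
  simp only [hamRange, Finset.card_filter, Finset.sum_range_add]

theorem hamRange_two_pow_sub_one (u v : ℕ → A) (K : ℕ) : hamRange u v (2 ^ K - 1) =
    ∑ k ∈ Finset.range K,
      hamRange (fun j => u (2 ^ k - 1 + j)) (fun j => v (2 ^ k - 1 + j)) (2 ^ k) := by
  induction K with
  | zero => simp [hamRange]
  | succ K ih =>
    rw [Finset.sum_range_succ, ← ih, ← hamRange_add]
    congr 1
    have := Nat.one_le_two_pow (n := K)
    rw [pow_succ]
    omega

theorem hamIcc_neg_eq_hamRange_add (x y : ℤ → A) (n : ℕ) : hamIcc x y (-n) n =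
    hamRange (fun j => x j) (fun j => y j) (n + 1) +
      hamRange (fun j => x (-j - 1)) (fun j => y (-j - 1)) n := by
  rw [hamIcc_eq_card_filter, hamRange, hamRange, ← Finset.card_disjSum]
  refine Finset.card_nbij' (fun i => if 0 ≤ i then .inl i.toNat else .inr (-i - 1).toNat)
    (Sum.elim (fun j => j) (fun j => -j - 1)) ?_ ?_ ?_ ?_
  · intro i hi
    simp only [Finset.mem_coe, Finset.mem_filter, Finset.mem_Icc] at hi
    dsimp only
    split_ifs with h
    · simp only [Finset.mem_coe, Finset.inl_mem_disjSum, Finset.mem_filter, Finset.mem_range,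
        Int.toNat_of_nonneg h]
      exact ⟨by omega, hi.2⟩
    · have e : ((-i - 1).toNat : ℤ) = -i - 1 := Int.toNat_of_nonneg (by omega)
      simp only [Finset.mem_coe, Finset.inr_mem_disjSum, Finset.mem_filter, Finset.mem_range, e,
        neg_sub, sub_neg_eq_add, add_sub_cancel_left]
      exact ⟨by omega, hi.2⟩
  · rintro (j | j) hj <;>
      simp only [Finset.mem_coe, Finset.inl_mem_disjSum, Finset.inr_mem_disjSum,
        Finset.mem_filter, Finset.mem_range, Finset.mem_Icc, Sum.elim_inl, Sum.elim_inr] at hj ⊢ <;>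
      exact ⟨⟨by omega, by omega⟩, hj.2⟩
  · intro i _
    dsimp only
    split_ifs with h
    · exact Int.toNat_of_nonneg h
    · show -((-i - 1).toNat : ℤ) - 1 = i
      omega
  · rintro (j | j) - <;> dsimp only [Sum.elim_inl, Sum.elim_inr]
    · rw [if_pos (Int.natCast_nonneg j), Int.toNat_natCast]
    · rw [if_neg (by omega)]
      congr 1
      omega

end HammingRange

end Hamming

theorem limsup_le_limsup_of_le_add {u v e : ℕ → ℝ} (hu : IsBoundedUnder (· ≥ ·) atTop u)
    (hv : IsBoundedUnder (· ≤ ·) atTop v) (hv' : IsBoundedUnder (· ≥ ·) atTop v)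
    (he : Tendsto e atTop (𝓝 0)) (h : ∀ n, u n ≤ v n + e n) :
    limsup u atTop ≤ limsup v atTop :=
  calc limsup u atTop ≤ limsup (v + e) atTop :=
        limsup_le_limsup (.of_forall h) hu.isCoboundedUnder_le
          (isBoundedUnder_le_add hv he.isBoundedUnder_le)
    _ ≤ limsup v atTop + limsup e atTop :=
        limsup_add_le hv' hv he.isBoundedUnder_ge.isCoboundedUnder_le he.isBoundedUnder_le
    _ = limsup v atTop := by rw [he.limsup_eq, add_zero]

theorem tendsto_two_mul_natCast_add_one_atTop :
    Tendsto (fun n : ℕ => 2 * (n : ℝ) + 1) atTop atTop :=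
  (tendsto_natCast_atTop_atTop.const_mul_atTop two_pos).atTop_add tendsto_const_nhds

theorem tendsto_one_div_two_mul_natCast_add_one :
    Tendsto (fun n : ℕ => 1 / (2 * (n : ℝ) + 1)) atTop (𝓝 0) :=
  tendsto_two_mul_natCast_add_one_atTop.inv_tendsto_atTop.congr fun _ => (one_div _).symm

theorem tendsto_natLog_add_one_div :
    Tendsto (fun n : ℕ => ((Nat.log 2 (n + 1) : ℝ) + 1) / (2 * n + 1)) atTop (𝓝 0) := by
  have hlim : Tendsto (fun X : ℝ => Real.log X / X / Real.log 2 + X⁻¹) atTop (𝓝 0) := by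
    simpa using ((Real.tendsto_pow_log_div_mul_add_atTop 1 0 1 one_ne_zero).div_const
      (Real.log 2)).add tendsto_inv_atTop_zero
  refine squeeze_zero (fun n => by positivity) (fun n => ?_)
    (hlim.comp tendsto_two_mul_natCast_add_one_atTop)
  have hlog : (Nat.log 2 (n + 1) : ℝ) ≤ Real.log (2 * n + 1) / Real.log 2 :=
    calc (Nat.log 2 (n + 1) : ℝ) ≤ Real.logb 2 ((n + 1 : ℕ) : ℝ) := by
          exact_mod_cast Real.natLog_le_logb (n + 1) 2
      _ ≤ Real.logb 2 (2 * n + 1) :=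
          Real.logb_le_logb_of_le (by norm_num) (by positivity) (by push_cast; linarith)
  calc ((Nat.log 2 (n + 1) : ℝ) + 1) / (2 * n + 1)
      ≤ (Real.log (2 * n + 1) / Real.log 2 + 1) / (2 * n + 1) := by gcongr
    _ = _ := by simp only [Function.comp_apply]; ring

section Pseudodistance

variable {A : Type*}

noncomputable def hamRatio (x y : ℤ → A) (n : ℕ) : ℝ := hamIcc x y (-n) n / (2 * n + 1)

theorem dB_eq_limsup_hamRatio (x y : ℤ → A) : dB x y = limsup (hamRatio x y) atTop := rfl

theorem hamRatio_nonneg (x y : ℤ → A) (n : ℕ) : 0 ≤ hamRatio x y n := by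
  unfold hamRatio
  positivity

theorem hamRatio_le_one (x y : ℤ → A) (n : ℕ) : hamRatio x y n ≤ 1 := by
  rw [hamRatio, div_le_one (by positivity)]
  exact_mod_cast hamIcc_le_card x y n

theorem isBoundedUnder_le_hamRatio (x y : ℤ → A) :
    IsBoundedUnder (· ≤ ·) atTop (hamRatio x y) :=
  isBoundedUnder_of ⟨1, hamRatio_le_one x y⟩

theorem isBoundedUnder_ge_hamRatio (x y : ℤ → A) :
    IsBoundedUnder (· ≥ ·) atTop (hamRatio x y) :=
  isBoundedUnder_of ⟨0, hamRatio_nonneg x y⟩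

theorem dB_nonneg (x y : ℤ → A) : 0 ≤ dB x y :=
  le_limsup_of_frequently_le (.of_forall (hamRatio_nonneg x y)) (isBoundedUnder_le_hamRatio x y)

theorem dB_le_limsup_of_hamIcc_le {x y : ℤ → A} {v g : ℕ → ℝ}
    (hv : IsBoundedUnder (· ≤ ·) atTop v) (hv' : IsBoundedUnder (· ≥ ·) atTop v)
    (hg : Tendsto (fun n : ℕ => g n / (2 * n + 1)) atTop (𝓝 0))
    (h : ∀ n : ℕ, (hamIcc x y (-n) n : ℝ) ≤ (2 * n + 1) * v n + g n) :
    dB x y ≤ limsup v atTop := by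
  refine limsup_le_limsup_of_le_add (isBoundedUnder_ge_hamRatio x y) hv hv' hg fun n => ?_
  rw [div_le_iff₀ (by positivity), add_mul, div_mul_cancel₀ _ (by positivity)]
  linarith [h n]

theorem dB_le_of_hamIcc_le {x y : ℤ → A} {c : ℝ} {g : ℕ → ℝ}
    (hg : Tendsto (fun n : ℕ => g n / (2 * n + 1)) atTop (𝓝 0))
    (h : ∀ n : ℕ, (hamIcc x y (-n) n : ℝ) ≤ c * (2 * n + 1) + g n) : dB x y ≤ c := by
  simpa using dB_le_limsup_of_hamIcc_le (v := fun _ => c) isBoundedUnder_const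
    isBoundedUnder_const hg fun n => (h n).trans_eq (by ring)

theorem dB_self (x : ℤ → A) : dB x x = 0 := by
  simp [dB, hamIcc_self]

theorem dB_comm (x y : ℤ → A) : dB x y = dB y x := by
  simp only [dB, hamIcc_comm x y]

theorem dB_triangle (x y z : ℤ → A) : dB x z ≤ dB x y + dB y z :=
  calc dB x z ≤ limsup (hamRatio x y + hamRatio y z) atTop := by
        refine limsup_le_limsup (.of_forall fun n => ?_)
          (isBoundedUnder_ge_hamRatio x z).isCoboundedUnder_le
          (isBoundedUnder_le_add (isBoundedUnder_le_hamRatio x y)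
            (isBoundedUnder_le_hamRatio y z))
        simp only [hamRatio, Pi.add_apply, ← add_div]
        gcongr
        exact_mod_cast hamIcc_triangle x y z _ _
    _ ≤ dB x y + dB y z :=
        limsup_add_le (isBoundedUnder_ge_hamRatio x y) (isBoundedUnder_le_hamRatio x y)
          (isBoundedUnder_ge_hamRatio y z).isCoboundedUnder_le (isBoundedUnder_le_hamRatio y z)

theorem dB_shiftMap (x y : ℤ → A) : dB (shiftMap x) (shiftMap y) = dB x y := by
  have hl (n : ℕ) : hamIcc x y (-n + 1) (n + 1) ≤ hamIcc x y (-n) n + 1 :=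
    hamIcc_le_add_one_of_subset_insert x y (c := n + 1) fun i => by
      simp only [Finset.mem_Icc, Finset.mem_insert]
      omega
  have hr (n : ℕ) : hamIcc x y (-n) n ≤ hamIcc x y (-n + 1) (n + 1) + 1 :=
    hamIcc_le_add_one_of_subset_insert x y (c := -n) fun i => by
      simp only [Finset.mem_Icc, Finset.mem_insert]
      omega
  apply le_antisymm
  · refine dB_le_limsup_of_hamIcc_le (isBoundedUnder_le_hamRatio x y)
      (isBoundedUnder_ge_hamRatio x y) tendsto_one_div_two_mul_natCast_add_one fun n => ?_
    rw [mul_div_cancel₀ _ (by positivity), hamIcc_shiftMap]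
    exact_mod_cast hl n
  · refine dB_le_limsup_of_hamIcc_le (isBoundedUnder_le_hamRatio _ _)
      (isBoundedUnder_ge_hamRatio _ _) tendsto_one_div_two_mul_natCast_add_one fun n => ?_
    rw [mul_div_cancel₀ _ (by positivity), hamIcc_shiftMap]
    exact_mod_cast hr n

end Pseudodistance

/-- A type synonym for `ℤ → A` carrying the Besicovitch pseudometric instead of the product
topology. -/
def Besicovitch (A : Type*) := ℤ → A

namespace Besicovitch

variable {A : Type*}

def toBesicovitch : (ℤ → A) ≃ Besicovitch A := Equiv.refl _

noncomputable instance : PseudoMetricSpace (Besicovitch A) where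
  dist := dB
  dist_self := dB_self
  dist_comm := dB_comm
  dist_triangle := dB_triangle

noncomputable instance : MeasurableSpace (Besicovitch A) := borel _

instance : BorelSpace (Besicovitch A) := ⟨rfl⟩

def shift : Besicovitch A → Besicovitch A := shiftMap

theorem topology_eq_generateFrom :
    (inferInstance : TopologicalSpace (Besicovitch A)) = TopologicalSpace.generateFrom
      {s | ∃ (x : ℤ → A) (ε : ℝ), 0 < ε ∧ s = {y | dB x y < ε}} := by
  have hball (x : ℤ → A) (ε : ℝ) : {y | dB x y < ε} = Metric.ball (toBesicovitch x) ε :=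
    Set.ext fun y => show dB x y < ε ↔ dB y x < ε by rw [dB_comm]
  refine (TopologicalSpace.isTopologicalBasis_of_isOpen_of_nhds ?_
    fun x u hx hu => ?_).eq_generateFrom
  · rintro _ ⟨x, ε, -, rfl⟩
    exact hball x ε ▸ Metric.isOpen_ball
  · obtain ⟨ε, hε, hsub⟩ := Metric.isOpen_iff.1 hu x hx
    refine ⟨Metric.ball x ε, ⟨toBesicovitch.symm x, ε, hε, ?_⟩, Metric.mem_ball_self hε, hsub⟩
    rw [hball, Equiv.apply_symm_apply]

theorem isometry_shift : Isometry (shift : Besicovitch A → Besicovitch A) :=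
  Isometry.of_dist_eq dB_shiftMap

theorem measurable_shift : Measurable (shift : Besicovitch A → Besicovitch A) :=
  isometry_shift.continuous.measurable

theorem measurableSet_setOf_dist_eq_zero (x : Besicovitch A) :
    MeasurableSet {y | dist x y = 0} := by
  have : {y | dist x y = 0} = Metric.closedBall x 0 :=
    Set.ext fun y => by
      rw [Metric.mem_closedBall, dist_comm]
      exact ⟨le_of_eq, fun h => le_antisymm h dist_nonneg⟩
  exact this ▸ Metric.isClosed_closedBall.measurableSet

end Besicovitch

section DensityCoding

theorem abs_natAbs_floor_sub_floor_sub_abs_sub_lt_one (a b : ℝ) :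
    |((⌊a⌋ - ⌊b⌋).natAbs : ℝ) - (|a - b|)| < 1 := by
  rw [Nat.cast_natAbs, Int.cast_abs, Int.cast_sub]
  refine (abs_abs_sub_abs_le_abs_sub _ _).trans_lt (abs_sub_lt_iff.2 ⟨?_, ?_⟩) <;>
    linarith [Int.floor_le a, Int.lt_floor_add_one a, Int.floor_le b, Int.lt_floor_add_one b]

theorem card_filter_decide_le_ne {a b : ℤ} {L : ℕ} (ha : 0 ≤ a) (hb : 0 ≤ b) (haL : a ≤ L)
    (hbL : b ≤ L) :
    #{j ∈ Finset.range L | decide (a ≤ ((j : ℕ) : ℤ)) ≠ decide (b ≤ ((j : ℕ) : ℤ))} =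
      (a - b).natAbs := by
  wlog hab : a ≤ b generalizing a b
  · simp_rw [ne_comm (a := decide (a ≤ _))]
    rw [this hb ha hbL haL (by omega), ← Int.natAbs_neg, neg_sub]
  have : {j ∈ Finset.range L | decide (a ≤ ((j : ℕ) : ℤ)) ≠ decide (b ≤ ((j : ℕ) : ℤ))} =
      Finset.Ico a.toNat b.toNat := by
    ext j
    simp only [Finset.mem_filter, Finset.mem_range, Finset.mem_Ico, ne_eq, decide_eq_decide]
    omega
  rw [this, Nat.card_Ico]
  omega

theorem add_one_le_two_pow_log_add_one_sub_one (N : ℕ) :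
    N + 1 ≤ 2 ^ (Nat.log 2 (N + 1) + 1) - 1 := by
  have : N + 1 < 2 ^ (Nat.log 2 (N + 1) + 1) := Nat.lt_pow_succ_log_self one_lt_two (N + 1)
  omega

theorem Uprime_two_pow_sub_one_add (x : ℝ) {k j : ℕ} (hj : j < 2 ^ k) :
    Uprime x (2 ^ k - 1 + j) = decide (⌊x * 2 ^ k⌋ ≤ j) := by
  have h1 : 1 ≤ 2 ^ k := Nat.one_le_two_pow
  have hlog : Nat.log 2 (2 ^ k - 1 + j + 1) = k :=
    Nat.log_eq_of_pow_le_of_lt_pow (by omega) (by rw [pow_succ]; omega)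
  rw [Uprime, hlog]
  congr 3
  push_cast [Nat.cast_sub h1]
  ring

theorem Tprime_natCast (x : ℝ) (j : ℕ) : Tprime x j = Uprime x j := by
  simp [Tprime]

theorem Tprime_neg_natCast_sub_one (x : ℝ) (j : ℕ) : Tprime x (-j - 1) = Uprime x j := by
  simp only [Tprime]
  rw [if_neg (by omega)]
  congr
  omega

theorem hamIcc_Tprime (s t : ℝ) (n : ℕ) : hamIcc (Tprime s) (Tprime t) (-n) n =
    hamRange (Uprime s) (Uprime t) (n + 1) + hamRange (Uprime s) (Uprime t) n := by
  simp only [hamIcc_neg_eq_hamRange_add, Tprime_natCast, Tprime_neg_natCast_sub_one]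

theorem hamIcc_shiftMap_Tprime_le (x : ℝ) (n : ℕ) :
    hamIcc (shiftMap (Tprime x)) (Tprime x) (-n) n ≤
      2 * hamRange (fun i => Uprime x (i + 1)) (Uprime x) (n + 1) := by
  have hright : (fun j : ℕ => shiftMap (Tprime x) j) = fun j => Uprime x (j + 1) := by
    ext j
    rw [shiftMap, ← Tprime_natCast, Nat.cast_succ]
  -- on the negative side `σ T'(x)` is `U'(x)` delayed by one place
  have hleft : (fun j : ℕ => shiftMap (Tprime x) (-(1 + j : ℕ) - 1)) = Uprime x := by
    ext j
    rw [shiftMap, ← Tprime_neg_natCast_sub_one]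
    congr 1
    push_cast
    ring
  have hfirst : hamRange (fun j : ℕ => shiftMap (Tprime x) (-j - 1)) (fun j => Tprime x (-j - 1))
      1 = 0 := by
    simp [hamRange, shiftMap, Tprime]
  have hmono : hamRange (fun i => Uprime x (i + 1)) (Uprime x) n ≤
      hamRange (fun i => Uprime x (i + 1)) (Uprime x) (n + 1) := hamRange_mono _ _ n.le_succ
  have hleft_le : hamRange (fun j : ℕ => shiftMap (Tprime x) (-j - 1))
      (fun j => Tprime x (-j - 1)) n ≤ hamRange (fun i => Uprime x (i + 1)) (Uprime x) n := by
    refine (hamRange_mono _ _ (Nat.le_add_left n 1)).trans_eq ?_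
    rw [hamRange_add, hfirst, zero_add, hleft, hamRange_comm]
    simp only [Tprime_neg_natCast_sub_one, add_comm 1]
  rw [hamIcc_neg_eq_hamRange_add, hright, show (fun j : ℕ => Tprime x j) = Uprime x from
    funext (Tprime_natCast x)]
  omega

theorem hamRange_block_succ_Uprime_le_two (x : ℝ) (k : ℕ) :
    hamRange (fun j => Uprime x (2 ^ k - 1 + j + 1)) (fun j => Uprime x (2 ^ k - 1 + j))
      (2 ^ k) ≤ 2 := by
  refine (Finset.card_le_card (t := {(⌊x * 2 ^ k⌋ - 1).toNat, 2 ^ k - 1}) fun j hj => ?_).trans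
    Finset.card_le_two
  simp only [Finset.mem_filter, Finset.mem_range, Finset.mem_insert,
    Finset.mem_singleton] at hj ⊢
  obtain ⟨hjk, hne⟩ := hj
  by_cases hlast : j + 1 < 2 ^ k
  · rw [add_assoc, Uprime_two_pow_sub_one_add x hlast, Uprime_two_pow_sub_one_add x hjk, ne_eq,
      decide_eq_decide] at hne
    push_cast at hne
    omega
  · omega

theorem hamRange_succ_Uprime_le (x : ℝ) (N : ℕ) :
    hamRange (fun i => Uprime x (i + 1)) (Uprime x) (N + 1) ≤ 2 * (Nat.log 2 (N + 1) + 1) := by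
  set K := Nat.log 2 (N + 1) + 1
  have hN : N + 1 ≤ 2 ^ K - 1 := add_one_le_two_pow_log_add_one_sub_one N
  calc _ ≤ hamRange (fun i => Uprime x (i + 1)) (Uprime x) (2 ^ K - 1) := hamRange_mono _ _ hN
    _ ≤ ∑ k ∈ Finset.range K, 2 := by
      rw [hamRange_two_pow_sub_one]
      exact Finset.sum_le_sum fun k _ => hamRange_block_succ_Uprime_le_two x k
    _ = 2 * K := by simp [mul_comm]

theorem floor_mul_two_pow_mem_Icc {s : ℝ} (hs : s ∈ I) (k : ℕ) :
    ⌊s * 2 ^ k⌋ ∈ Set.Icc 0 (2 ^ k) := by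
  refine ⟨Int.floor_nonneg.2 (mul_nonneg hs.1 (by positivity)), Int.floor_le_iff.2 ?_⟩
  push_cast
  nlinarith [hs.2, pow_pos (two_pos (α := ℝ)) k]

theorem hamRange_Uprime_block {s t : ℝ} (hs : s ∈ I) (ht : t ∈ I) (k : ℕ) :
    hamRange (fun j => Uprime s (2 ^ k - 1 + j)) (fun j => Uprime t (2 ^ k - 1 + j)) (2 ^ k) =
      (⌊s * 2 ^ k⌋ - ⌊t * 2 ^ k⌋).natAbs := by
  obtain ⟨hs0, hs1⟩ := floor_mul_two_pow_mem_Icc hs k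
  obtain ⟨ht0, ht1⟩ := floor_mul_two_pow_mem_Icc ht k
  rw [hamRange, ← card_filter_decide_le_ne hs0 ht0 (by exact_mod_cast hs1) (by exact_mod_cast ht1)]
  congr 1
  refine Finset.filter_congr fun j hj => ?_
  rw [Finset.mem_range] at hj
  rw [Uprime_two_pow_sub_one_add s hj, Uprime_two_pow_sub_one_add t hj]

theorem hamRange_Uprime_le {s t : ℝ} (hs : s ∈ I) (ht : t ∈ I) (N : ℕ) :
    (hamRange (Uprime s) (Uprime t) (N + 1) : ℝ) ≤
      |s - t| * (2 * N + 1) + (Nat.log 2 (N + 1) + 1) := by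
  set K := Nat.log 2 (N + 1) + 1 with hK
  have hN : N + 1 ≤ 2 ^ K - 1 := add_one_le_two_pow_log_add_one_sub_one N
  have hpow : (2 : ℝ) ^ K ≤ 2 * N + 2 := by
    have := Nat.pow_log_le_self 2 (by omega : N + 1 ≠ 0)
    rw [hK, pow_succ]
    exact_mod_cast (by omega : 2 ^ Nat.log 2 (N + 1) * 2 ≤ 2 * N + 2)
  calc (hamRange (Uprime s) (Uprime t) (N + 1) : ℝ)
      ≤ hamRange (Uprime s) (Uprime t) (2 ^ K - 1) := by exact_mod_cast hamRange_mono _ _ hN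
    _ = ∑ k ∈ Finset.range K, ((⌊s * 2 ^ k⌋ - ⌊t * 2 ^ k⌋).natAbs : ℝ) := by
      rw [hamRange_two_pow_sub_one]
      push_cast
      simp only [hamRange_Uprime_block hs ht]
    _ ≤ ∑ k ∈ Finset.range K, (|s - t| * 2 ^ k + 1) := by
      refine Finset.sum_le_sum fun k _ => ?_
      have := abs_natAbs_floor_sub_floor_sub_abs_sub_lt_one (s * 2 ^ k) (t * 2 ^ k)
      rw [← sub_mul, abs_mul, abs_pow, abs_two] at this
      linarith [(abs_sub_lt_iff.1 this).1]
    _ = |s - t| * (2 ^ K - 1) + K := by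
      rw [Finset.sum_add_distrib, ← Finset.mul_sum, geom_sum_eq (by norm_num)]
      norm_num
    _ ≤ |s - t| * (2 * N + 1) + (Nat.log 2 (N + 1) + 1) := by
      rw [hK]
      push_cast
      gcongr
      linarith

theorem sub_one_le_hamRange_Uprime {s t : ℝ} (hs : s ∈ I) (ht : t ∈ I) (K : ℕ) :
    |s - t| * 2 ^ K - 1 ≤ hamRange (Uprime s) (Uprime t) (2 ^ (K + 1) - 1) := by
  have hlast : (⌊s * 2 ^ K⌋ - ⌊t * 2 ^ K⌋).natAbs ≤
      hamRange (Uprime s) (Uprime t) (2 ^ (K + 1) - 1) := by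
    rw [hamRange_two_pow_sub_one, Finset.sum_range_succ, hamRange_Uprime_block hs ht]
    exact Nat.le_add_left _ _
  have hfloor := abs_natAbs_floor_sub_floor_sub_abs_sub_lt_one (s * 2 ^ K) (t * 2 ^ K)
  rw [← sub_mul, abs_mul, abs_pow, abs_two] at hfloor
  have : ((⌊s * 2 ^ K⌋ - ⌊t * 2 ^ K⌋).natAbs : ℝ) ≤
      hamRange (Uprime s) (Uprime t) (2 ^ (K + 1) - 1) := by
    exact_mod_cast hlast
  linarith [(abs_sub_lt_iff.1 hfloor).2]

theorem dB_shiftMap_Tprime (x : ℝ) : dB (shiftMap (Tprime x)) (Tprime x) = 0 := by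
  refine le_antisymm (dB_le_of_hamIcc_le (c := 0)
    (g := fun n => 4 * ((Nat.log 2 (n + 1) : ℝ) + 1)) ?_ fun n => ?_) (dB_nonneg _ _)
  · simpa [mul_div_assoc] using tendsto_natLog_add_one_div.const_mul 4
  · have h1 := hamIcc_shiftMap_Tprime_le x n
    have h2 := hamRange_succ_Uprime_le x n
    have : hamIcc (shiftMap (Tprime x)) (Tprime x) (-n) n ≤ 4 * (Nat.log 2 (n + 1) + 1) := by
      omega
    rw [zero_mul, zero_add]
    exact_mod_cast this

theorem dB_Tprime_le {s t : ℝ} (hs : s ∈ I) (ht : t ∈ I) :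
    dB (Tprime s) (Tprime t) ≤ 2 * |s - t| := by
  refine dB_le_of_hamIcc_le (g := fun n => 2 * ((Nat.log 2 (n + 1) : ℝ) + 1)) ?_ fun n => ?_
  · simpa [mul_div_assoc] using tendsto_natLog_add_one_div.const_mul 2
  · have h1 := hamRange_Uprime_le hs ht n
    have h2 : (hamRange (Uprime s) (Uprime t) n : ℝ) ≤ hamRange (Uprime s) (Uprime t) (n + 1) := by
      exact_mod_cast hamRange_mono _ _ n.le_succ
    rw [hamIcc_Tprime]
    push_cast
    linarith

/-- The window `[-n, n]` with `n = 2 ^ (K + 1) - 2` ends exactly with the `K`-th dyadic block. -/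
theorem le_hamRatio_Tprime {s t : ℝ} (hs : s ∈ I) (ht : t ∈ I) (K : ℕ) :
    (|s - t| * 2 ^ K - 1) / (4 * 2 ^ K) ≤ hamRatio (Tprime s) (Tprime t) (2 ^ (K + 1) - 2) := by
  have h2 : 2 ≤ 2 ^ (K + 1) := Nat.le_self_pow (by omega) 2
  have hden : 2 * ((2 ^ (K + 1) - 2 : ℕ) : ℝ) + 1 ≤ 4 * 2 ^ K := by
    rw [Nat.cast_sub h2, pow_succ]
    push_cast
    linarith
  have hlow := sub_one_le_hamRange_Uprime hs ht K
  rw [hamRatio, hamIcc_Tprime, show 2 ^ (K + 1) - 2 + 1 = 2 ^ (K + 1) - 1 by omega]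
  push_cast
  exact div_le_div₀ (by positivity) (by linarith) (by positivity) hden

theorem abs_sub_div_eight_le_dB_Tprime {s t : ℝ} (hs : s ∈ I) (ht : t ∈ I) :
    |s - t| / 8 ≤ dB (Tprime s) (Tprime t) := by
  rcases (abs_nonneg (s - t)).eq_or_lt with h0 | hpos
  · rw [← h0, zero_div]
    exact dB_nonneg _ _
  obtain ⟨K₀, hK₀⟩ := pow_unbounded_of_one_lt (2 / |s - t|) one_lt_two
  rw [dB_eq_limsup_hamRatio]
  refine le_limsup_of_frequently_le (frequently_atTop.2 fun N => ?_)
    (isBoundedUnder_le_hamRatio _ _)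
  refine ⟨2 ^ (max K₀ N + 1) - 2, ?_, le_trans ?_ (le_hamRatio_Tprime hs ht (max K₀ N))⟩
  · have := Nat.lt_two_pow_self (n := max K₀ N + 1)
    have := le_max_right K₀ N
    omega
  · have hK : (2 : ℝ) ^ K₀ ≤ 2 ^ max K₀ N := pow_le_pow_right₀ one_le_two (le_max_left _ _)
    rw [div_lt_iff₀ hpos] at hK₀
    rw [le_div_iff₀ (by positivity)]
    nlinarith

end DensityCoding

namespace Besicovitch

noncomputable def densityCode (x : I) : Besicovitch Bool := toBesicovitch (Tprime x)

theorem lipschitzWith_densityCode : LipschitzWith 2 densityCode :=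
  LipschitzWith.of_dist_le_mul fun x y => (dB_Tprime_le x.2 y.2).trans_eq (by
    rw [Subtype.dist_eq, Real.dist_eq, NNReal.coe_ofNat])

theorem dist_shift_densityCode (x : I) : dist (shift (densityCode x)) (densityCode x) = 0 :=
  dB_shiftMap_Tprime x

theorem eq_of_dist_densityCode_eq_zero {x y : I} (h : dist (densityCode x) (densityCode y) = 0) :
    x = y := by
  have := (abs_sub_div_eight_le_dB_Tprime x.2 y.2).trans_eq h
  exact Subtype.ext (sub_eq_zero.1 (abs_nonpos_iff.1 (by linarith)))

open MeasureTheory in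
theorem exists_shift_invariant_measure :
    ∃ μ : Measure (Besicovitch Bool), μ ≠ 0 ∧
      (∀ s, MeasurableSet s → μ (shift ⁻¹' s) = μ s) ∧ ∀ x, μ {y | dist x y = 0} = 0 := by
  have hmeas : Measurable densityCode := lipschitzWith_densityCode.continuous.measurable
  have : IsProbabilityMeasure (volume.map densityCode) :=
    Measure.isProbabilityMeasure_map hmeas.aemeasurable
  refine ⟨volume.map densityCode, IsProbabilityMeasure.ne_zero _, fun s hs => ?_, fun x => ?_⟩
  · rw [Measure.map_apply hmeas (measurable_shift hs), Measure.map_apply hmeas hs]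
    congr 1
    ext t
    exact (Metric.inseparable_iff.2 (dist_shift_densityCode t)).mem_measurableSet_iff hs
  · rw [Measure.map_apply hmeas (measurableSet_setOf_dist_eq_zero x)]
    refine Set.Subsingleton.measure_zero (fun a ha b hb => eq_of_dist_densityCode_eq_zero ?_) _
    refine le_antisymm ?_ dist_nonneg
    calc dist (densityCode a) (densityCode b) ≤ dist x (densityCode a) + dist x (densityCode b) :=
          dist_triangle_left _ _ _
      _ = 0 := by rw [ha, hb, add_zero]

end Besicovitch

/-- there is a nontrivial (nonzero, nonatomic, i.e. giving measure zero
to every `dB`-equivalence class) shift-invariant Borel measure for the Besicovitch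
topology on `{0,1}^ℤ`. -/
theorem exists_nontrivial_shift_invariant_besicovitch_measure :
    let τ : TopologicalSpace (ℤ → Bool) :=
      TopologicalSpace.generateFrom
        {s | ∃ (x : ℤ → Bool) (ε : ℝ), 0 < ε ∧ s = {y | dB x y < ε}}
    let m : MeasurableSpace (ℤ → Bool) := @borel _ τ
    ∃ μ : @MeasureTheory.Measure (ℤ → Bool) m,
      μ ≠ 0 ∧
      (∀ s : Set (ℤ → Bool), @MeasurableSet _ m s → μ (shiftMap ⁻¹' s) = μ s) ∧
      (∀ x : ℤ → Bool, μ {y | dB x y = 0} = 0) :=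
  Besicovitch.topology_eq_generateFrom ▸ Besicovitch.exists_shift_invariant_measure
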